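/- Let N ≥ 1 and let {A_N(k); k ∈ ℤ} be d×d nonnegative matrices with A_N(k) = 0 for all k ≤ −N−1, such that Σ_{k∈ℤ} |k|·A_N(k) is entrywise finite and A := Σ_{k∈ℤ} A_N(k) is an irreducible stochastic matrix with unique stationary probability vector ϖ. Assume σ_N := ϖ (Σ_{k∈ℤ} k·A_N(k)) e < 0, where e is the all-ones column vector. Then there exists M0 ∈ ℕ such that for every M ≥ M0, Σ_{ℓ=−MN}^{∞} ℓ·A_N^{*M}(ℓ) e < 0 componentwise, where A_N^{*M} denotes the M-fold convolution: A_N^{*1} = A_N and A_N^{*M}(k) = Σ_{ℓ∈ℤ} A_N^{*(M−1)}(k−ℓ) A_N(ℓ). -/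

import Mathlib

open Filter Set

namespace MasuTrunc

variable {d : ℕ}

/-- Entries of the `n`-th power of a `d×d` matrix. -/
def finMatPow (Q : Fin d → Fin d → ℝ) : ℕ → Fin d → Fin d → ℝ
  | 0 => fun i j => if i = j then (1 : ℝ) else 0
  | n + 1 => fun i j => ∑ r : Fin d, finMatPow Q n i r * Q r j

/-- `convZ F M` is the `M`-fold convolution of the family of `d×d` matrices
`{F(k); k ∈ ℤ}`: `convZ F 1 = F` and
`convZ F M (k) = Σ_ℓ convZ F (M−1) (k−ℓ) · F(ℓ)`. -/
noncomputable def convZ (F : ℤ → Fin d → Fin d → ℝ) : ℕ → ℤ → Fin d → Fin d → ℝ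
  | 0 => fun k i j => if k = 0 ∧ i = j then (1 : ℝ) else 0
  | M + 1 => fun k i j => ∑' l : ℤ, ∑ r : Fin d, convZ F M (k - l) i r * F l r j

/-! Write `T = Σ_k A(k)` and `D = Σ_k k A(k)`. Since `T` is stochastic, the mean increment of the
`M`-fold convolution started in state `i` is `Σ_{t<M} (Tᵗ D e)_i`: the first moment of a
convolution is the moment of one factor times the mass of the other, plus the converse.
The Cesàro means `M⁻¹ Σ_{t<M} Tᵗ` converge to the matrix with all rows `ϖ`, because each limit
point `B` is stochastic with `B T = B`, so its rows are stationary and equal `ϖ`. Hence `M⁻¹`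
times the mean increment tends to `ϖ D e = σ_N < 0` in every component. -/

open Finset Matrix Topology

theorem summable_of_summable_intCast_mul {f : ℤ → ℝ} (h : Summable fun k : ℤ => (k : ℝ) * f k) :
    Summable f := by
  refine h.norm.of_norm_bounded_eventually ((eventually_cofinite_ne 0).mono fun k hk => ?_)
  have hk1 : (1 : ℝ) ≤ ‖(k : ℝ)‖ := by
    rw [Real.norm_eq_abs, ← Int.cast_abs]
    exact_mod_cast Int.one_le_abs hk
  rw [norm_mul]
  exact le_mul_of_one_le_left (norm_nonneg _) hk1

noncomputable def intConv (f g : ℤ → ℝ) (k : ℤ) : ℝ := ∑' l, f (k - l) * g l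

section intConv

variable {f g : ℤ → ℝ} {a b a' b' : ℝ}

theorem hasSum_intConv_prod (hf : HasSum f a) (hg : HasSum g b) :
    HasSum (fun p : ℤ × ℤ => f (p.1 - p.2) * g p.2) (a * b) := by
  let e : ℤ × ℤ ≃ ℤ × ℤ :=
    ⟨fun p => (p.1 - p.2, p.2), fun p => (p.1 + p.2, p.2), fun p => by simp, fun p => by simp⟩
  exact (e.hasSum_iff (f := fun p : ℤ × ℤ => f p.1 * g p.2)).2 <|
    hf.mul hg (summable_mul_of_summable_norm hf.summable.norm hg.summable.norm)

theorem summable_intConv_fiber (hf : Summable f) (hg : Summable g) (k : ℤ) :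
    Summable fun l => f (k - l) * g l :=
  (hasSum_intConv_prod hf.hasSum hg.hasSum).summable.prod_factor k

theorem hasSum_intConv (hf : HasSum f a) (hg : HasSum g b) : HasSum (intConv f g) (a * b) :=
  (hasSum_intConv_prod hf hg).prod_fiberwise fun k =>
    (summable_intConv_fiber hf.summable hg.summable k).hasSum

theorem intCast_mul_intConv (hf : Summable f) (hg : Summable g)
    (hf' : Summable fun k : ℤ => (k : ℝ) * f k) (hg' : Summable fun k : ℤ => (k : ℝ) * g k)
    (k : ℤ) : (k : ℝ) * intConv f g k =
      intConv (fun k => (k : ℝ) * f k) g k + intConv f (fun k => (k : ℝ) * g k) k := by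
  rw [intConv, intConv, intConv, ← tsum_mul_left,
    ← (summable_intConv_fiber hf' hg k).tsum_add (summable_intConv_fiber hf hg' k)]
  congr 1
  funext l
  push_cast
  ring

theorem hasSum_intCast_mul_intConv (hf : HasSum f a) (hg : HasSum g b)
    (hf' : HasSum (fun k : ℤ => (k : ℝ) * f k) a') (hg' : HasSum (fun k : ℤ => (k : ℝ) * g k) b') :
    HasSum (fun k : ℤ => (k : ℝ) * intConv f g k) (a' * b + a * b') := by
  simp_rw [intCast_mul_intConv hf.summable hg.summable hf'.summable hg'.summable]
  exact (hasSum_intConv hf' hg).add (hasSum_intConv hf hg')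

end intConv

theorem sum_range_succ_pow_mul_mul_pow {R : Type*} [Semiring R] (a b : R) (M : ℕ) :
    ∑ t ∈ range (M + 1), a ^ t * b * a ^ (M + 1 - 1 - t) =
      (∑ t ∈ range M, a ^ t * b * a ^ (M - 1 - t)) * a + a ^ M * b := by
  rw [sum_range_succ, sum_mul, Nat.add_sub_cancel, Nat.sub_self, pow_zero, mul_one]
  congr 1
  refine sum_congr rfl fun t ht => ?_
  have hsucc : M - 1 - t + 1 = M - t := by have := mem_range.1 ht; omega
  rw [mul_assoc (a ^ t * b), ← pow_succ, hsucc]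

noncomputable def massMatrix (F : ℤ → Fin d → Fin d → ℝ) : Matrix (Fin d) (Fin d) ℝ :=
  Matrix.of fun i j => ∑' k, F k i j

noncomputable def driftMatrix (F : ℤ → Fin d → Fin d → ℝ) : Matrix (Fin d) (Fin d) ℝ :=
  Matrix.of fun i j => ∑' k : ℤ, (k : ℝ) * F k i j

theorem driftMatrix_mulVec_one {F : ℤ → Fin d → Fin d → ℝ}
    (hF' : ∀ i j, Summable fun k : ℤ => (k : ℝ) * F k i j) (i : Fin d) :
    (driftMatrix F *ᵥ 1) i = ∑' k : ℤ, (k : ℝ) * ∑ j, F k i j := by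
  simp_rw [mul_sum]
  simpa [mulVec, dotProduct, driftMatrix] using
    (Summable.tsum_finsetSum fun j _ => hF' i j).symm

section convZ

variable {F : ℤ → Fin d → Fin d → ℝ}

theorem convZ_succ_apply {M : ℕ} (hM : ∀ i j, Summable (convZ F M · i j))
    (hF : ∀ i j, Summable (F · i j)) (k : ℤ) (i j : Fin d) :
    convZ F (M + 1) k i j = ∑ r, intConv (convZ F M · i r) (F · r j) k :=
  Summable.tsum_finsetSum fun r _ => summable_intConv_fiber (hM i r) (hF r j) k

theorem hasSum_convZ (hF : ∀ i j, Summable (F · i j)) (M : ℕ) (i j : Fin d) :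
    HasSum (convZ F M · i j) ((massMatrix F ^ M) i j) := by
  induction M generalizing i j with
  | zero =>
    rw [pow_zero, one_apply]
    convert hasSum_single (f := (convZ F 0 · i j)) 0 fun k hk => by simp [convZ, hk]
    simp [convZ]
  | succ M ih =>
    simp_rw [convZ_succ_apply (fun i j => (ih i j).summable) hF, pow_succ, mul_apply]
    exact hasSum_sum fun r _ => hasSum_intConv (ih i r) (hF r j).hasSum

/-- The first moment is the derivative at `z = 1` of `(Σ_k F(k) z^k)^M`. -/
theorem hasSum_intCast_mul_convZ (hF : ∀ i j, Summable (F · i j))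
    (hF' : ∀ i j, Summable fun k : ℤ => (k : ℝ) * F k i j) (M : ℕ) (i j : Fin d) :
    HasSum (fun k : ℤ => (k : ℝ) * convZ F M k i j)
      ((∑ t ∈ range M, massMatrix F ^ t * driftMatrix F * massMatrix F ^ (M - 1 - t)) i j) := by
  induction M generalizing i j with
  | zero =>
    convert hasSum_zero with k
    · by_cases hk : k = 0 <;> simp [convZ, hk]
    · simp
  | succ M ih =>
    simp_rw [convZ_succ_apply (fun i j => (hasSum_convZ hF M i j).summable) hF, mul_sum,
      sum_range_succ_pow_mul_mul_pow, Matrix.add_apply, mul_apply, ← sum_add_distrib]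
    exact hasSum_sum fun r _ =>
      hasSum_intCast_mul_intConv (hasSum_convZ hF M i r) (hF r j).hasSum (ih i r) (hF' r j).hasSum

end convZ

section Stochastic

variable {n : Type*} [Fintype n] [DecidableEq n]

theorem isCompact_rowStochastic : IsCompact (rowStochastic ℝ n : Set (Matrix n n ℝ)) := by
  refine (isCompact_univ_pi fun _ => isCompact_univ_pi fun _ => isCompact_Icc
    (a := (0 : ℝ)) (b := 1)).of_isClosed_subset ?_ fun M hM i _ j _ =>
      ⟨nonneg_of_mem_rowStochastic hM, le_one_of_mem_rowStochastic hM⟩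
  have hset : (rowStochastic ℝ n : Set (Matrix n n ℝ)) =
      (⋂ i, ⋂ j, {M | 0 ≤ M i j}) ∩ {M | M *ᵥ 1 = 1} := by
    ext M
    simp [mem_rowStochastic]
  rw [hset]
  exact (isClosed_iInter fun i => isClosed_iInter fun j => isClosed_le continuous_const
    (continuous_id.matrix_elem i j : Continuous fun M : Matrix n n ℝ => M i j)).inter
    (isClosed_eq (continuous_id.matrix_mulVec continuous_const) continuous_const)

theorem smul_sum_range_pow_mem_rowStochastic {T : Matrix n n ℝ} (hT : T ∈ rowStochastic ℝ n)
    {M : ℕ} (hM : M ≠ 0) : (M : ℝ)⁻¹ • ∑ t ∈ range M, T ^ t ∈ rowStochastic ℝ n := by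
  rw [smul_sum]
  refine convex_rowStochastic.sum_mem (fun _ _ => by positivity) ?_ fun t _ => pow_mem hT t
  simp [hM]

theorem smul_sum_range_pow_mul_sub (T : Matrix n n ℝ) (M : ℕ) :
    ((M : ℝ)⁻¹ • ∑ t ∈ range M, T ^ t) * T - (M : ℝ)⁻¹ • ∑ t ∈ range M, T ^ t =
      (M : ℝ)⁻¹ • T ^ M - (M : ℝ)⁻¹ • 1 := by
  rw [smul_mul_assoc, ← smul_sub, ← smul_sub, sum_mul, ← sum_sub_distrib]
  simp_rw [← pow_succ]
  rw [sum_range_sub (fun t => T ^ t), pow_zero]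

theorem tendsto_smul_sum_range_pow {T : Matrix n n ℝ} (hT : T ∈ rowStochastic ℝ n) {ϖ : n → ℝ}
    (huniq : ∀ v ∈ stdSimplex ℝ n, v ᵥ* T = v → v = ϖ) :
    Tendsto (fun M : ℕ => (M : ℝ)⁻¹ • ∑ t ∈ range M, T ^ t) atTop (𝓝 (of fun _ => ϖ)) := by
  have hdefect : Tendsto (fun M : ℕ => ((M : ℝ)⁻¹ • ∑ t ∈ range M, T ^ t) * T -
      (M : ℝ)⁻¹ • ∑ t ∈ range M, T ^ t) atTop (𝓝 0) := by
    simp_rw [smul_sum_range_pow_mul_sub]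
    simpa using ((isCompact_rowStochastic.isVonNBounded ℝ).smul_tendsto_zero
      (Eventually.of_forall fun M => pow_mem hT M) (tendsto_inv_atTop_nhds_zero_nat (𝕜 := ℝ))).sub
      ((tendsto_inv_atTop_nhds_zero_nat (𝕜 := ℝ)).smul_const (1 : Matrix n n ℝ))
  refine isCompact_rowStochastic.tendsto_nhds_of_unique_mapClusterPt
    ((eventually_ne_atTop 0).mono fun M hM => smul_sum_range_pow_mem_rowStochastic hT hM)
    fun B hB hclust => ?_
  have hBT : B * T = B := by
    have h : MapClusterPt (B * T - B) atTop fun M : ℕ =>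
        ((M : ℝ)⁻¹ • ∑ t ∈ range M, T ^ t) * T - (M : ℝ)⁻¹ • ∑ t ∈ range M, T ^ t :=
      hclust.tendsto_comp (((continuous_mul_const T).sub continuous_id).tendsto B)
    exact sub_eq_zero.1 (eq_of_nhds_neBot (h.clusterPt.mono hdefect).neBot)
  ext i j
  have hrow : B i ∈ stdSimplex ℝ n :=
    ⟨fun _ => nonneg_of_mem_rowStochastic hB, sum_row_of_mem_rowStochastic hB i⟩
  exact congrFun (huniq (B i) hrow (congrFun hBT i)) j

theorem sum_pow_mul_mul_pow_mulVec_one {T : Matrix n n ℝ} (hT : T ∈ rowStochastic ℝ n)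
    (D : Matrix n n ℝ) (M : ℕ) :
    (∑ t ∈ range M, T ^ t * D * T ^ (M - 1 - t)) *ᵥ 1 = (∑ t ∈ range M, T ^ t) *ᵥ (D *ᵥ 1) := by
  rw [sum_mulVec, sum_mulVec]
  refine sum_congr rfl fun t _ => ?_
  rw [← mulVec_mulVec, one_vecMul_of_mem_rowStochastic (pow_mem hT _), mulVec_mulVec]

theorem eventually_sum_range_pow_mulVec_neg {T : Matrix n n ℝ} (hT : T ∈ rowStochastic ℝ n)
    {ϖ : n → ℝ} (huniq : ∀ v ∈ stdSimplex ℝ n, v ᵥ* T = v → v = ϖ) {m : n → ℝ} (hm : ϖ ⬝ᵥ m < 0) :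
    ∀ᶠ M in atTop, ∀ i, ((∑ t ∈ range M, T ^ t) *ᵥ m) i < 0 := by
  have hlim : Tendsto (fun M : ℕ => ((M : ℝ)⁻¹ • ∑ t ∈ range M, T ^ t) *ᵥ m) atTop
      (𝓝 fun _ => ϖ ⬝ᵥ m) :=
    ((continuous_id.matrix_mulVec continuous_const).tendsto _).comp
      (tendsto_smul_sum_range_pow hT huniq)
  filter_upwards [eventually_all.2 fun i => (tendsto_pi_nhds.1 hlim i).eventually_lt_const hm,
    eventually_gt_atTop 0] with M hneg hM i
  have := hneg i
  rw [smul_mulVec, Pi.smul_apply, smul_eq_mul] at this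
  exact neg_of_mul_neg_right this (by positivity)

end Stochastic

theorem hasSum_intCast_mul_sum_convZ {F : ℤ → Fin d → Fin d → ℝ}
    (hF : ∀ i j, Summable (F · i j)) (hF' : ∀ i j, Summable fun k : ℤ => (k : ℝ) * F k i j)
    (hT : massMatrix F ∈ rowStochastic ℝ (Fin d)) (M : ℕ) (i : Fin d) :
    HasSum (fun k : ℤ => (k : ℝ) * ∑ j, convZ F M k i j)
      (((∑ t ∈ range M, massMatrix F ^ t) *ᵥ (driftMatrix F *ᵥ 1)) i) := by
  rw [← sum_pow_mul_mul_pow_mulVec_one hT]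
  simp_rw [mul_sum]
  simpa [mulVec, dotProduct] using hasSum_sum fun j _ => hasSum_intCast_mul_convZ hF hF' M i j

theorem negative_drift_convolution_general (d : ℕ)
    (A : ℤ → Fin d → Fin d → ℝ)
    (hAnn : ∀ k i j, 0 ≤ A k i j)
    (hmom : ∀ i j, Summable fun k : ℤ => |(k : ℝ)| * A k i j)
    (Asum : Fin d → Fin d → ℝ) (hAsum : ∀ i j, Asum i j = ∑' k : ℤ, A k i j)
    (hstoch : ∀ i, (∑ j : Fin d, Asum i j) = 1)
    (ϖ : Fin d → ℝ)
    (hϖuniq : ∀ ϖ' : Fin d → ℝ, (∀ i, 0 ≤ ϖ' i) → (∑ i : Fin d, ϖ' i) = 1 →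
        (∀ j, (∑ i : Fin d, ϖ' i * Asum i j) = ϖ' j) → ϖ' = ϖ)
    (hσ : (∑ i : Fin d, ϖ i * ∑' k : ℤ, (k : ℝ) * ∑ j : Fin d, A k i j) < 0) :
    ∃ M0 : ℕ, 1 ≤ M0 ∧ ∀ M : ℕ, M0 ≤ M → ∀ i : Fin d,
      (∑' l : ℤ, (l : ℝ) * ∑ j : Fin d, convZ A M l i j) < 0 := by
  obtain rfl : Asum = massMatrix A := funext₂ hAsum
  have hA' : ∀ i j, Summable fun k : ℤ => (k : ℝ) * A k i j := fun i j =>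
    (hmom i j).of_norm_bounded fun k => by simp [abs_of_nonneg (hAnn k i j)]
  have hA : ∀ i j, Summable (A · i j) := fun i j => summable_of_summable_intCast_mul (hA' i j)
  have hT : massMatrix A ∈ rowStochastic ℝ (Fin d) :=
    mem_rowStochastic_iff_sum.2 ⟨fun i j => tsum_nonneg fun k => hAnn k i j, hstoch⟩
  have hdrift : ϖ ⬝ᵥ (driftMatrix A *ᵥ 1) < 0 := by
    simpa only [dotProduct, driftMatrix_mulVec_one hA'] using hσ
  obtain ⟨M0, hM0⟩ := eventually_atTop.1 (eventually_sum_range_pow_mulVec_neg hT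
    (fun v hv hvT => hϖuniq v hv.1 hv.2 (congrFun hvT)) hdrift)
  refine ⟨max M0 1, le_max_right _ _, fun M hM i => ?_⟩
  rw [(hasSum_intCast_mul_sum_convZ hA hA' hT M i).tsum_eq]
  exact hM0 M (le_of_max_le_left hM) i

/-- Lemma 5.1: if `{A_N(k)}` vanishes for `k ≤ −N−1`, has a
finite first moment, sums to an irreducible stochastic matrix with unique
stationary probability vector `ϖ`, and has negative mean drift `σ_N < 0`, then
there is an `M0` such that for every `M ≥ M0` the mean increment vector of the
`M`-fold convolution is componentwise negative. -/
theorem negative_drift_convolution (d N : ℕ) (hd : 0 < d) (hN : 1 ≤ N)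
    (A : ℤ → Fin d → Fin d → ℝ)
    (hAnn : ∀ k i j, 0 ≤ A k i j)
    (hA0 : ∀ k : ℤ, k ≤ -(N : ℤ) - 1 → ∀ i j, A k i j = 0)
    (hmom : ∀ i j, Summable fun k : ℤ => |(k : ℝ)| * A k i j)
    (Asum : Fin d → Fin d → ℝ) (hAsum : ∀ i j, Asum i j = ∑' k : ℤ, A k i j)
    (hstoch : ∀ i, (∑ j : Fin d, Asum i j) = 1)
    (hirr : ∀ i j, ∃ n : ℕ, 0 < finMatPow Asum n i j)
    (ϖ : Fin d → ℝ) (hϖnn : ∀ i, 0 ≤ ϖ i) (hϖ1 : (∑ i : Fin d, ϖ i) = 1)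
    (hϖstat : ∀ j, (∑ i : Fin d, ϖ i * Asum i j) = ϖ j)
    (hϖuniq : ∀ ϖ' : Fin d → ℝ, (∀ i, 0 ≤ ϖ' i) → (∑ i : Fin d, ϖ' i) = 1 →
        (∀ j, (∑ i : Fin d, ϖ' i * Asum i j) = ϖ' j) → ϖ' = ϖ)
    (hσ : (∑ i : Fin d, ϖ i * ∑' k : ℤ, (k : ℝ) * ∑ j : Fin d, A k i j) < 0) :
    ∃ M0 : ℕ, 1 ≤ M0 ∧ ∀ M : ℕ, M0 ≤ M → ∀ i : Fin d,
      (∑' l : ℤ, (l : ℝ) * ∑ j : Fin d, convZ A M l i j) < 0 :=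
  negative_drift_convolution_general d A hAnn hmom Asum hAsum hstoch ϖ hϖuniq hσ

end MasuTrunc
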